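/- If a flow has an i.a.t stochastic arrival curve λ ∈ G with bounding function h ∈ F̄, then for every η > 0 it has a v.s.d stochastic arrival curve λ_{−η}(n) = λ(n) − η·n with bounding function h^η(x) = min{1, h(x) + (1/η)∫_x^∞ h(y) dy}; i.e., for all n ≥ 0 and x ≥ 0, P{ sup_{0≤m≤n} { λ(n−m) − η(n−m) − [a(n)−a(m)] } > x } ≤ min{1, h(x) + (1/η)∫_x^∞ h(y) dy}. -/

import Mathlib

/-!
The event that the supremum exceeds `x` is the union over `m ≤ n` of the events
`λ(n - m) - [a(n) - a(m)] > x + η (n - m)`, so the union bound and the i.a.t. bound give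
`∑_{k=0}^{n} h(x + η k)`. Since `h` is decreasing, the term `h(x + η k)` with `k ≥ 1` is at most
the mean of `h` over `[x + η (k - 1), x + η k]`, so these terms add up to at most
`(1/η) ∫_x^∞ h`.
-/

open MeasureTheory

/-- Iterated tail integrals: `f⁽⁰⁾ = f`, `f⁽ⁿ⁺¹⁾(x) = ∫_x^∞ f⁽ⁿ⁾(y) dy`. -/
noncomputable def tailIter (f : ℝ → ℝ) : ℕ → ℝ → ℝ
  | 0 => f
  | n + 1 => fun x => ∫ y in Set.Ici x, tailIter f n y

open Finset

lemma measureReal_sup'_gt_le_sum {Ω ι : Type*} [MeasurableSpace Ω] (μ : Measure Ω)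
    [IsFiniteMeasure μ] {s : Finset ι} (hs : s.Nonempty) (f : ι → Ω → ℝ) (x : ℝ) :
    μ.real {ω | s.sup' hs (f · ω) > x} ≤ ∑ i ∈ s, μ.real {ω | f i ω > x} := by
  refine (measureReal_mono (fun ω (hω : x < _) => ?_) (measure_ne_top _ _)).trans
    (measureReal_biUnion_finset_le s _)
  obtain ⟨i, hi, hlt⟩ := (lt_sup'_iff hs).mp hω
  exact Set.mem_biUnion hi hlt

lemma sum_Iic_comp_sub (g : ℝ → ℝ) (n : ℕ) :
    ∑ m ∈ Iic n, g (n - m) = ∑ k ∈ range (n + 1), g k := by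
  rw [← Nat.range_succ_eq_Iic, ← sum_range_reflect]
  refine sum_congr rfl fun k hk => ?_
  rw [Nat.add_sub_cancel, Nat.cast_sub (Nat.le_of_lt_succ (mem_range.mp hk)), sub_sub_cancel]

lemma Antitone.sum_comp_add_mul_le_integral_Ici {h : ℝ → ℝ} (hh : Antitone h) {x η : ℝ}
    (hη : 0 < η) (hnn : ∀ y ≥ x, 0 ≤ h y) (hint : IntegrableOn h (Set.Ici x)) (n : ℕ) :
    ∑ k ∈ range n, h (x + η * (k + 1)) ≤ (1 / η) * ∫ y in Set.Ici x, h y := by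
  have hsum : ∑ k ∈ range n, h (x + η * (k + 1)) ≤ ∫ t in (0 : ℝ)..n, h (x + η * t) := by
    simpa using AntitoneOn.sum_le_integral (x₀ := 0) (a := n)
      (fun s _ t _ hst => hh (by gcongr) : AntitoneOn (fun t => h (x + η * t)) _)
  have hxn : x ≤ x + η * n := le_add_of_nonneg_right (by positivity)
  have htail : ∫ y in x..x + η * n, h y ≤ ∫ y in Set.Ici x, h y := by
    rw [intervalIntegral.integral_of_le hxn]
    exact setIntegral_mono_set hint (ae_restrict_of_forall_mem measurableSet_Ici hnn)
      (Filter.Eventually.of_forall fun _ hy => le_of_lt hy.1)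
  calc ∑ k ∈ range n, h (x + η * (k + 1))
      ≤ ∫ t in (0 : ℝ)..n, h (x + η * t) := hsum
    _ = (1 / η) * ∫ y in x..x + η * n, h y := by
      simp [intervalIntegral.integral_comp_add_mul _ hη.ne']
    _ ≤ (1 / η) * ∫ y in Set.Ici x, h y := by gcongr

theorem stmt_9_general {Ω : Type*} [MeasurableSpace Ω] (P : Measure Ω)
    [IsProbabilityMeasure P]
    (a : ℕ → Ω → ℝ)
    (lam : ℕ → ℝ)
    (h : ℝ → ℝ) (hh_anti : Antitone h) (hh_nonneg : ∀ x, 0 ≤ h x)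
    (hh_tails : ∀ n : ℕ, ∀ x : ℝ, 0 ≤ x → IntegrableOn (tailIter h n) (Set.Ici x))
    (hiat : ∀ m n : ℕ, m ≤ n → ∀ x : ℝ, 0 ≤ x →
      (P {ω | lam (n - m) - (a n ω - a m ω) > x}).toReal ≤ h x)
    (η : ℝ) (hη : 0 < η) :
    ∀ n : ℕ, ∀ x : ℝ, 0 ≤ x →
      (P {ω | (Finset.Iic n).sup' Finset.nonempty_Iic
          (fun m => lam (n - m) - η * ((n : ℝ) - m) - (a n ω - a m ω))
            > x}).toReal
        ≤ min 1 (h x + (1 / η) * ∫ y in Set.Ici x, h y) := by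
  intro n x hx
  refine le_min measureReal_le_one ?_
  have hterm : ∀ m ∈ Iic n, P.real {ω | lam (n - m) - η * ((n : ℝ) - m) - (a n ω - a m ω) > x}
      ≤ h (x + η * ((n : ℝ) - m)) := fun m hm => by
    have hmn : (m : ℝ) ≤ n := Nat.cast_le.mpr (mem_Iic.mp hm)
    have hsub : {ω | lam (n - m) - η * ((n : ℝ) - m) - (a n ω - a m ω) > x}
        ⊆ {ω | lam (n - m) - (a n ω - a m ω) > x + η * ((n : ℝ) - m)} :=
      Set.ofPred_subset_ofPred.mpr fun ω hω => by linarith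
    exact (measureReal_mono hsub).trans (hiat m n (mem_Iic.mp hm) _
      (add_nonneg hx (mul_nonneg hη.le (sub_nonneg.mpr hmn))))
  calc _ ≤ ∑ m ∈ Iic n, P.real {ω | lam (n - m) - η * ((n : ℝ) - m) - (a n ω - a m ω) > x} :=
        measureReal_sup'_gt_le_sum P _ _ x
    _ ≤ ∑ m ∈ Iic n, h (x + η * ((n : ℝ) - m)) := sum_le_sum hterm
    _ = h x + ∑ k ∈ range n, h (x + η * (k + 1)) := by
      rw [sum_Iic_comp_sub (fun t => h (x + η * t)), sum_range_succ']
      simp [add_comm]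
    _ ≤ h x + (1 / η) * ∫ y in Set.Ici x, h y := by
      gcongr
      exact hh_anti.sum_comp_add_mul_le_integral_Ici hη (fun y _ => hh_nonneg y)
        (hh_tails 0 x hx) n

theorem stmt_9 {Ω : Type*} [MeasurableSpace Ω] (P : Measure Ω)
    [IsProbabilityMeasure P]
    (a : ℕ → Ω → ℝ) (ha_meas : ∀ n, Measurable (a n))
    (ha_mono : ∀ ω, Monotone fun n => a n ω)
    (lam : ℕ → ℝ) (hlam_mono : Monotone lam) (hlam_nonneg : ∀ n, 0 ≤ lam n)
    (h : ℝ → ℝ) (hh_anti : Antitone h) (hh_nonneg : ∀ x, 0 ≤ h x)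
    (hh_tails : ∀ n : ℕ, ∀ x : ℝ, 0 ≤ x → IntegrableOn (tailIter h n) (Set.Ici x))
    (hiat : ∀ m n : ℕ, m ≤ n → ∀ x : ℝ, 0 ≤ x →
      (P {ω | lam (n - m) - (a n ω - a m ω) > x}).toReal ≤ h x)
    (η : ℝ) (hη : 0 < η) :
    ∀ n : ℕ, ∀ x : ℝ, 0 ≤ x →
      (P {ω | (Finset.Iic n).sup' Finset.nonempty_Iic
          (fun m => lam (n - m) - η * ((n : ℝ) - m) - (a n ω - a m ω))
            > x}).toReal
        ≤ min 1 (h x + (1 / η) * ∫ y in Set.Ici x, h y) :=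
  stmt_9_general P a lam h hh_anti hh_nonneg hh_tails hiat η hη
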